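/- Let CoP(T) = 0.0068 T^2 + 0.0008 T + 0.458 and f(T) = 1 + 1/CoP(T). For F(x) = log(f(e^x)), the second derivative satisfies F''(log T) = T · q(T) / p(T)^2 for some polynomial p with positive coefficients, where q(T) = 9826 T^5 + 2023 T^4 + 136 T^3 − 81426 T^2 − 141899850 T − 4173525 (up to a positive constant scaling of p and q). -/

import Mathlib

noncomputable def CoP (T : ℝ) : ℝ := 0.0068 * T ^ 2 + 0.0008 * T + 0.458

noncomputable def fCoP (T : ℝ) : ℝ := 1 + 1 / CoP T

noncomputable def Fll (x : ℝ) : ℝ := Real.log (fCoP (Real.exp x))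

/-- The numerator polynomial `q`. -/
noncomputable def qpoly (T : ℝ) : ℝ :=
  9826 * T ^ 5 + 2023 * T ^ 4 + 136 * T ^ 3 - 81426 * T ^ 2
    - 141899850 * T - 4173525

/-!
Clearing denominators, `2500 · CoP` and `2500 · (CoP + 1)` are the quadratics
`17 T² + 2 T + c` with `c = 1145` and `c = 3645`, both positive, so `f` is their quotient.
Under `T = eˣ` one has `F' = T f'(T) / f(T) = -2500 T (34 T + 2) / (N D)` with `N, D` these
quadratics, and `F'' = T · d/dT (T f'/f) = 5000 T q(T) / (N D)²`; the product `p = N D` has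
positive coefficients.
-/

open Real Polynomial

noncomputable def copQuad (c T : ℝ) : ℝ := 17 * T ^ 2 + 2 * T + c

lemma copQuad_pos {c : ℝ} (hc : 1 < 17 * c) (T : ℝ) : 0 < copQuad c T := by
  unfold copQuad
  nlinarith [sq_nonneg (17 * T + 1)]

lemma hasDerivAt_copQuad (c T : ℝ) : HasDerivAt (copQuad c) (34 * T + 2) T :=
  (((((hasDerivAt_id' T).pow 2).const_mul 17).add
    ((hasDerivAt_id' T).const_mul 2)).add_const c).congr_deriv (by norm_num; ring)

lemma fCoP_eq_div (T : ℝ) : fCoP T = copQuad 3645 T / copQuad 1145 T := by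
  have hD := (copQuad_pos (c := 1145) (by norm_num) T).ne'
  have hCoP : CoP T = copQuad 1145 T / 2500 := by
    unfold CoP copQuad
    norm_num
    ring
  rw [fCoP, hCoP]
  field_simp
  unfold copQuad
  ring

lemma HasDerivAt.log_comp_exp {f : ℝ → ℝ} {f' x : ℝ} (hf : HasDerivAt f f' (Real.exp x))
    (hx : f (Real.exp x) ≠ 0) :
    HasDerivAt (fun x => Real.log (f (Real.exp x))) (Real.exp x * f' / f (Real.exp x)) x :=
  ((hf.comp x (Real.hasDerivAt_exp x)).log hx).congr_deriv (by rw [Function.comp_apply]; ring)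

/-- The elasticity `T f'(T) / f(T)` of `fCoP`. -/
noncomputable def fCoPElasticity (T : ℝ) : ℝ :=
  -2500 * (T * (34 * T + 2)) / (copQuad 3645 T * copQuad 1145 T)

lemma hasDerivAt_fCoP (T : ℝ) :
    HasDerivAt fCoP (-2500 * (34 * T + 2) / copQuad 1145 T ^ 2) T := by
  have hD := (copQuad_pos (c := 1145) (by norm_num) T).ne'
  rw [show fCoP = fun T => copQuad 3645 T / copQuad 1145 T from funext fCoP_eq_div]
  exact ((hasDerivAt_copQuad 3645 T).div (hasDerivAt_copQuad 1145 T) hD).congr_deriv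
    (by unfold copQuad; ring)

lemma deriv_Fll : deriv Fll = fCoPElasticity ∘ exp := by
  funext x
  have hN := (copQuad_pos (c := 3645) (by norm_num) (exp x)).ne'
  have hD := (copQuad_pos (c := 1145) (by norm_num) (exp x)).ne'
  have hf : fCoP (exp x) ≠ 0 := by rw [fCoP_eq_div]; exact div_ne_zero hN hD
  rw [show Fll = fun x => log (fCoP (exp x)) from rfl,
    ((hasDerivAt_fCoP (exp x)).log_comp_exp hf).deriv, fCoP_eq_div, Function.comp_apply,
    fCoPElasticity]
  field_simp

lemma hasDerivAt_fCoPElasticity (T : ℝ) :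
    HasDerivAt fCoPElasticity
      (5000 * qpoly T / (copQuad 3645 T * copQuad 1145 T) ^ 2) T := by
  have hN := (copQuad_pos (c := 3645) (by norm_num) T).ne'
  have hD := (copQuad_pos (c := 1145) (by norm_num) T).ne'
  have hnum : HasDerivAt (fun T => -2500 * (T * (34 * T + 2))) (-2500 * (68 * T + 2)) T :=
    (((hasDerivAt_id' T).mul (((hasDerivAt_id' T).const_mul 34).add_const 2)).const_mul
      _).congr_deriv (by ring)
  exact (hnum.div ((hasDerivAt_copQuad 3645 T).mul (hasDerivAt_copQuad 1145 T))
    (mul_ne_zero hN hD)).congr_deriv <| by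
      simp only [Pi.mul_apply]
      unfold qpoly copQuad
      field_simp
      ring

noncomputable def ppoly : Polynomial ℝ :=
  C 289 * X ^ 4 + C 68 * X ^ 3 + C 81434 * X ^ 2 + C 9580 * X + C 4173525

lemma ppoly_eval (T : ℝ) : ppoly.eval T = copQuad 3645 T * copQuad 1145 T := by
  simp only [ppoly, copQuad, eval_add, eval_mul, eval_C, eval_pow, eval_X]
  ring

lemma ppoly_ne_zero : ppoly ≠ 0 := by
  intro h
  have h0 := ppoly_eval 0
  rw [h, eval_zero, copQuad, copQuad] at h0
  norm_num at h0

lemma ppoly_coeff_pos : ∀ i ∈ ppoly.support, 0 < ppoly.coeff i := by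
  intro i hi
  have hdeg : ppoly.natDegree ≤ 4 := by unfold ppoly; compute_degree
  have hi4 : i ≤ 4 := (le_natDegree_of_mem_supp i hi).trans hdeg
  interval_cases i <;> simp [ppoly, coeff_X_pow, coeff_C, coeff_X]

/-- There is a polynomial `p` with positive coefficients and a positive constant `κ`
such that `F''(log T) = κ · T · q(T) / p(T)²` for all `T > 0`. -/
theorem stmt1 :
    ∃ (p : Polynomial ℝ) (κ : ℝ), 0 < κ ∧ p ≠ 0 ∧
      (∀ i ∈ p.support, 0 < p.coeff i) ∧
      ∀ T : ℝ, 0 < T →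
        deriv (deriv Fll) (Real.log T) = κ * (T * qpoly T / (p.eval T) ^ 2) := by
  refine ⟨ppoly, 5000, by norm_num, ppoly_ne_zero, ppoly_coeff_pos, fun T hT => ?_⟩
  have h := (hasDerivAt_fCoPElasticity (exp (log T))).comp (log T) (hasDerivAt_exp (log T))
  rw [deriv_Fll, h.deriv, exp_log hT, ppoly_eval]
  ring
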